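/- arXiv:2111.08504 — 8 statements merged into one kernel-verified Lean document; each statement's English description precedes it below -/
import Mathlib

section
/- For any finite simple graph G=(V,E) and any vertex v ∈ V, γ_coe(G−v) ≤ γ_coe(G) + deg(v) − 1, where G−v is the graph obtained by deleting v and all edges incident to v. -/
open SimpleGraph

/-- The degree of a vertex: the number of its neighbours. -/
noncomputable def degN {V : Type*} (G : SimpleGraph V) (v : V) : ℕ :=
  (G.neighborSet v).ncard

/-- `D` is a co-even dominating set of `G`: it is a dominating set and every
vertex outside `D` has even degree. -/
def IsCoEvenDom {V : Type*} (G : SimpleGraph V) (D : Set V) : Prop :=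
  (∀ v ∉ D, ∃ u ∈ D, G.Adj u v) ∧ ∀ v ∉ D, Even (degN G v)

/-- The co-even domination number. -/
noncomputable def coevenNum {V : Type*} (G : SimpleGraph V) : ℕ :=
  sInf {n | ∃ D : Set V, IsCoEvenDom G D ∧ D.ncard = n}

lemma degN_induce_eq {V : Type*} (G : SimpleGraph V) (v : V)
    (u : {u : V | u ≠ v}) (hu : ¬ G.Adj v u) :
    degN (G.induce {u : V | u ≠ v}) u = degN G u := by
  have himg : Subtype.val '' ((G.induce {u : V | u ≠ v}).neighborSet u)
      = G.neighborSet (u : V) := by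
    ext w
    simp only [Set.mem_image, mem_neighborSet, comap_adj, Function.Embedding.coe_subtype,
      induce_eq_coe_induce_top, Subgraph.coe_adj, Subgraph.induce_adj, Subgraph.top_adj]
    constructor
    · rintro ⟨⟨w', hw'⟩, h, rfl⟩
      exact h.2.2
    · intro h
      have hwv : w ≠ v := by
        rintro rfl; exact hu h.symm
      exact ⟨⟨w, hwv⟩, ⟨u.2, hwv, h⟩, rfl⟩
  unfold degN
  rw [← himg, Set.ncard_image_of_injective _ Subtype.val_injective]

/-- `γ_coe(G−v) ≤ γ_coe(G) + deg v − 1`. -/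
theorem stmt_4 {V : Type*} [Fintype V] (G : SimpleGraph V) (v : V) :
    (coevenNum (G.induce {u : V | u ≠ v}) : ℤ) ≤ coevenNum G + degN G v - 1 := by
  classical
  have hne : {n | ∃ D : Set V, IsCoEvenDom G D ∧ D.ncard = n}.Nonempty := by
    refine ⟨(Set.univ : Set V).ncard, Set.univ, ⟨?_, ?_⟩, rfl⟩ <;>
      · intro w hw; exact absurd (Set.mem_univ w) hw
  obtain ⟨D, hDdom, hDcard⟩ := Nat.sInf_mem hne
  set V' := {u : V | u ≠ v} with hV'
  set N := G.neighborSet v with hN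
  set D' : Set V' := {u : V' | (u : V) ∈ D ∨ G.Adj v u} with hD'def
  -- D' is a co-even dominating set of the induced graph
  have hD' : IsCoEvenDom (G.induce V') D' := by
    constructor
    · intro u hu
      simp only [hD'def, Set.mem_setOf_eq, not_or] at hu
      obtain ⟨huD, huAdj⟩ := hu
      obtain ⟨w, hwD, hw⟩ := hDdom.1 u huD
      have hwv : w ≠ v := by rintro rfl; exact huAdj hw
      refine ⟨⟨w, hwv⟩, Or.inl hwD, ?_⟩
      simpa using hw
    · intro u hu
      simp only [hD'def, Set.mem_setOf_eq, not_or] at hu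
      rw [degN_induce_eq G v u hu.2]
      exact hDdom.2 u hu.1
  have hle : coevenNum (G.induce V') ≤ D'.ncard := Nat.sInf_le ⟨D', hD', rfl⟩
  -- compute the image of D'
  have himg : Subtype.val '' D' = (D \ {v}) ∪ N := by
    ext w
    simp only [hD'def, Set.mem_image, Set.mem_setOf_eq, Set.mem_union, Set.mem_diff,
      Set.mem_singleton_iff, hN, mem_neighborSet]
    constructor
    · rintro ⟨⟨w', hw'⟩, h, rfl⟩
      rcases h with h | h
      · exact Or.inl ⟨h, hw'⟩
      · exact Or.inr h
    · rintro (⟨h1, h2⟩ | h)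
      · exact ⟨⟨w, h2⟩, Or.inl h1, rfl⟩
      · exact ⟨⟨w, (G.ne_of_adj h).symm⟩, Or.inr h, rfl⟩
  have hD'card : D'.ncard = ((D \ {v}) ∪ N).ncard := by
    rw [← himg, Set.ncard_image_of_injective _ Subtype.val_injective]
  have hdeg : degN G v = N.ncard := rfl
  have key : (D'.ncard : ℤ) ≤ (D.ncard : ℤ) + N.ncard - 1 := by
    by_cases hv : v ∈ D
    · have h1 : D.ncard = (D \ {v}).ncard + 1 :=
        (Set.ncard_diff_singleton_add_one hv D.toFinite).symm
      have h2 : ((D \ {v}) ∪ N).ncard ≤ (D \ {v}).ncard + N.ncard :=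
        Set.ncard_union_le _ _
      rw [hD'card]
      push_cast [h1]
      omega
    · -- v is dominated by a neighbour in D
      obtain ⟨w, hwD, hw⟩ := hDdom.1 v hv
      have hdiag : D \ {v} = D := Set.diff_singleton_eq_self hv
      have hinter : 1 ≤ (D ∩ N).ncard := by
        rw [Nat.one_le_iff_ne_zero, ← Nat.pos_iff_ne_zero, Set.ncard_pos (D ∩ N).toFinite]
        exact ⟨w, hwD, hw.symm⟩
      have h3 : (D ∪ N).ncard + (D ∩ N).ncard = D.ncard + N.ncard :=
        Set.ncard_union_add_ncard_inter D N D.toFinite N.toFinite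
      rw [hD'card, hdiag]
      omega
  have hle' : (coevenNum (G.induce V') : ℤ) ≤ (D'.ncard : ℤ) := by exact_mod_cast hle
  have hG : coevenNum G = D.ncard := hDcard.symm
  rw [hdeg, hG]
  linarith
end

section
/- If D is a co-even dominating set of G−v, then D ∪ N_G[v] is a co-even dominating set of G, where N_G[v] is the closed neighbourhood of v in G. -/
open SimpleGraph

/-- If `D` is a co-even dominating set of `G−v`, then `D ∪ N_G[v]` is a
co-even dominating set of `G`. -/
theorem stmt_6 {V : Type*} [Fintype V] (G : SimpleGraph V) (v : V)
    (D : Set {u : V | u ≠ v}) (hD : IsCoEvenDom (G.induce {u : V | u ≠ v}) D) :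
    IsCoEvenDom G (Subtype.val '' D ∪ insert v (G.neighborSet v)) := by
  obtain ⟨hdom, heven⟩ := hD
  constructor
  · intro w hw
    rw [Set.mem_union, not_or] at hw
    obtain ⟨hw1, hw2⟩ := hw
    have hwv : w ≠ v := by rintro rfl; exact hw2 (Set.mem_insert _ _)
    have hwD : (⟨w, hwv⟩ : {u : V | u ≠ v}) ∉ D := fun h => hw1 ⟨_, h, rfl⟩
    obtain ⟨u, huD, hadj⟩ := hdom _ hwD
    exact ⟨u.val, Set.mem_union_left _ ⟨u, huD, rfl⟩, hadj⟩
  · intro w hw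
    rw [Set.mem_union, not_or] at hw
    obtain ⟨hw1, hw2⟩ := hw
    have hwv : w ≠ v := by rintro rfl; exact hw2 (Set.mem_insert _ _)
    have hnadj : ¬ G.Adj v w := fun h => hw2 (Set.mem_insert_of_mem _ h)
    have hwD : (⟨w, hwv⟩ : {u : V | u ≠ v}) ∉ D := fun h => hw1 ⟨_, h, rfl⟩
    have he := heven _ hwD
    have key : Subtype.val '' ((G.induce {u : V | u ≠ v}).neighborSet ⟨w, hwv⟩)
        = G.neighborSet w := by
      ext x
      simp only [Set.mem_image, mem_neighborSet, comap_adj, Function.Embedding.coe_subtype]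
      constructor
      · rintro ⟨⟨x, hx⟩, hadj, rfl⟩
        exact hadj
      · intro h
        have hxv : x ≠ v := fun e => hnadj ((e ▸ h).symm)
        exact ⟨⟨x, hxv⟩, h, rfl⟩
    unfold degN at he ⊢
    rw [← key, Set.ncard_image_of_injective _ Subtype.val_injective]
    exact he
end

section
/- For any finite simple graph G=(V,E) and any edge e ∈ E, γ_coe(G−e) ≤ γ_coe(G) + 2, where G−e is the graph obtained by removing the edge e. -/
open SimpleGraph

/-- `γ_coe(G−e) ≤ γ_coe(G) + 2`. -/
theorem stmt_7 {V : Type*} [Fintype V] (G : SimpleGraph V) (u v : V)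
    (he : G.Adj u v) :
    coevenNum (G.deleteEdges {s(u, v)}) ≤ coevenNum G + 2 := by
  have hne : {n | ∃ D : Set V, IsCoEvenDom G D ∧ D.ncard = n}.Nonempty := by
    exact ⟨(Set.univ : Set V).ncard, Set.univ,
      ⟨fun w hw => absurd (Set.mem_univ w) hw,
       fun w hw => absurd (Set.mem_univ w) hw⟩, rfl⟩
  obtain ⟨D, hD, hcard⟩ := Nat.sInf_mem hne
  set G' := G.deleteEdges {s(u, v)} with hG'
  have key : ∀ w, w ≠ u → w ≠ v → G'.neighborSet w = G.neighborSet w := by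
    intro w hwu hwv
    ext a
    simp only [mem_neighborSet, hG', SimpleGraph.deleteEdges_adj,
      Set.mem_singleton_iff, Sym2.eq_iff]
    constructor
    · exact fun h => h.1
    · intro h
      refine ⟨h, ?_⟩
      rintro (⟨rfl, rfl⟩ | ⟨rfl, rfl⟩)
      · exact hwu rfl
      · exact hwv rfl
  have hmem : IsCoEvenDom G' (D ∪ {u, v}) := by
    constructor
    · intro w hw
      have hwD : w ∉ D := fun h => hw (Or.inl h)
      have hwu : w ≠ u := fun h => hw (Or.inr (by simp [h]))
      have hwv : w ≠ v := fun h => hw (Or.inr (by simp [h]))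
      obtain ⟨d, hdD, hadj⟩ := hD.1 w hwD
      refine ⟨d, Or.inl hdD, ?_⟩
      simp only [hG', SimpleGraph.deleteEdges_adj, Set.mem_singleton_iff,
        Sym2.eq_iff]
      refine ⟨hadj, ?_⟩
      rintro (⟨rfl, rfl⟩ | ⟨rfl, rfl⟩)
      · exact hwv rfl
      · exact hwu rfl
    · intro w hw
      have hwD : w ∉ D := fun h => hw (Or.inl h)
      have hwu : w ≠ u := fun h => hw (Or.inr (by simp [h]))
      have hwv : w ≠ v := fun h => hw (Or.inr (by simp [h]))
      have : degN G' w = degN G w := by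
        unfold degN; rw [key w hwu hwv]
      rw [this]
      exact hD.2 w hwD
  have h1 : coevenNum G' ≤ (D ∪ {u, v}).ncard :=
    Nat.sInf_le ⟨D ∪ {u, v}, hmem, rfl⟩
  have h2 : (D ∪ {u, v}).ncard ≤ D.ncard + 2 := by
    calc (D ∪ {u, v}).ncard ≤ D.ncard + ({u, v} : Set V).ncard :=
          Set.ncard_union_le _ _
      _ ≤ D.ncard + 2 := by
          have : ({u, v} : Set V).ncard ≤ 2 := by
            have := Set.ncard_insert_le u ({v} : Set V)
            simpa using this
          omega
  have hc : D.ncard = coevenNum G := hcard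
  omega
end

section
/- For any finite simple graph G=(V,E) and any edge e ∈ E, γ_coe(G) ≤ γ_coe(G−e) + 2 (equivalently γ_coe(G−e) ≥ γ_coe(G) − 2). -/
open SimpleGraph

/-- `γ_coe(G) ≤ γ_coe(G−e) + 2`. -/
theorem stmt_8 {V : Type*} [Fintype V] (G : SimpleGraph V) (u v : V)
    (he : G.Adj u v) :
    coevenNum G ≤ coevenNum (G.deleteEdges {s(u, v)}) + 2 := by
  classical
  set G' := G.deleteEdges {s(u, v)} with hG'
  have hne : {n | ∃ D : Set V, IsCoEvenDom G' D ∧ D.ncard = n}.Nonempty :=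
    ⟨(Set.univ : Set V).ncard, Set.univ,
      ⟨fun w hw => absurd (Set.mem_univ w) hw,
       fun w hw => absurd (Set.mem_univ w) hw⟩, rfl⟩
  obtain ⟨D, hD, hcard⟩ := Nat.sInf_mem hne
  set E : Set V := D ∪ {u, v} with hE
  have hdom : IsCoEvenDom G E := by
    constructor
    · intro w hw
      have hwD : w ∉ D := fun h => hw (Or.inl h)
      obtain ⟨x, hx, hadj⟩ := hD.1 w hwD
      exact ⟨x, Or.inl hx, (SimpleGraph.deleteEdges_adj.mp hadj).1⟩
    · intro w hw
      have hwD : w ∉ D := fun h => hw (Or.inl h)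
      have hwu : w ≠ u := fun h => hw (Or.inr (Or.inl h))
      have hwv : w ≠ v := fun h => hw (Or.inr (Or.inr h))
      have hns : G'.neighborSet w = G.neighborSet w := by
        ext x
        simp only [SimpleGraph.mem_neighborSet, hG', SimpleGraph.deleteEdges_adj,
          Set.mem_singleton_iff, Sym2.eq_iff]
        constructor
        · exact fun h => h.1
        · intro h
          refine ⟨h, ?_⟩
          rintro (⟨rfl, rfl⟩ | ⟨rfl, rfl⟩)
          · exact hwu rfl
          · exact hwv rfl
      have := hD.2 w hwD
      unfold degN at this ⊢
      rwa [← hns]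
  have h1 : coevenNum G ≤ E.ncard := Nat.sInf_le ⟨E, hdom, rfl⟩
  have h2 : E.ncard ≤ D.ncard + 2 := by
    calc E.ncard ≤ D.ncard + ({u, v} : Set V).ncard :=
          Set.ncard_union_le D {u, v}
      _ ≤ D.ncard + 2 := by
          have : ({u, v} : Set V).ncard ≤ 2 := by
            calc ({u, v} : Set V).ncard ≤ ({v} : Set V).ncard + 1 :=
                  Set.ncard_insert_le u {v}
              _ = 2 := by rw [Set.ncard_singleton]
          omega
  calc coevenNum G ≤ D.ncard + 2 := le_trans h1 h2
    _ = coevenNum G' + 2 := by rw [hcard]; rfl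
end

section
/- If D is a co-even dominating set of G−e where e = uv, then D ∪ {u, v} is a co-even dominating set of G. -/
open SimpleGraph

/-- If `D` is a co-even dominating set of `G−e` with `e = uv`, then
`D ∪ {u, v}` is a co-even dominating set of `G`. -/
theorem stmt_9 {V : Type*} [Fintype V] (G : SimpleGraph V) (u v : V)
    (he : G.Adj u v) (D : Set V)
    (hD : IsCoEvenDom (G.deleteEdges {s(u, v)}) D) :
    IsCoEvenDom G (D ∪ {u, v}) := by
  obtain ⟨hdom, heven⟩ := hD
  constructor
  · intro w hw
    have hwD : w ∉ D := fun h => hw (Or.inl h)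
    obtain ⟨d, hd, hadj⟩ := hdom w hwD
    exact ⟨d, Or.inl hd, hadj.1⟩
  · intro w hw
    have hwD : w ∉ D := fun h => hw (Or.inl h)
    have hwu : w ≠ u := fun h => hw (Or.inr (by simp [h]))
    have hwv : w ≠ v := fun h => hw (Or.inr (by simp [h]))
    have hset : (G.deleteEdges {s(u, v)}).neighborSet w = G.neighborSet w := by
      ext x
      simp only [mem_neighborSet, deleteEdges_adj, Set.mem_singleton_iff]
      constructor
      · exact fun h => h.1
      · intro h
        refine ⟨h, fun hc => ?_⟩
        rcases Sym2.eq_iff.mp hc with ⟨h1, _⟩ | ⟨h1, _⟩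
        · exact hwu h1
        · exact hwv h1
    have := heven w hwD
    rwa [degN, hset] at this
end

section
/- For any finite simple graph G=(V,E) and vertex v ∈ V, γ_coe(G/v) ≤ γ_coe(G) + deg(v) − 1, where G/v is the vertex contraction of v: the graph obtained by deleting v and making the open neighbourhood N_G(v) into a clique (without creating parallel edges). -/
open SimpleGraph

/-- Vertex contraction `G/v`: delete `v` and make its open neighbourhood a clique. -/
def contractVertex {V : Type*} (G : SimpleGraph V) (v : V) :
    SimpleGraph {u : V // u ≠ v} :=
  SimpleGraph.fromRel (fun a b => G.Adj ↑a ↑b ∨ (G.Adj ↑a v ∧ G.Adj ↑b v))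

/-- Edge contraction `G/e` for `e = uv`: identify `u` and `v` into the vertex
`⟨u, h⟩`, adjacent to every former neighbour of `u` or of `v`. -/
def contractEdge {V : Type*} (G : SimpleGraph V) (u v : V) (h : u ≠ v) :
    SimpleGraph {x : V // x ≠ v} :=
  SimpleGraph.fromRel (fun a b =>
    G.Adj ↑a ↑b ∨ (↑a = u ∧ G.Adj v ↑b) ∨ (↑b = u ∧ G.Adj v ↑a))

lemma deg_contract_eq {V : Type*} (G : SimpleGraph V) (v : V)
    (w : {u : V // u ≠ v}) (hw : ¬ G.Adj v ↑w) :
    degN (contractVertex G v) w = degN G ↑w := by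
  have hset : Subtype.val '' ((contractVertex G v).neighborSet w) = G.neighborSet ↑w := by
    ext u
    simp only [Set.mem_image, mem_neighborSet, contractVertex, fromRel_adj]
    constructor
    · rintro ⟨⟨x, hx⟩, ⟨hne, h⟩, rfl⟩
      rcases h with (h | ⟨h1, h2⟩) | (h | ⟨h1, h2⟩)
      · exact h
      · exact absurd h1.symm hw
      · exact h.symm
      · exact absurd h2.symm hw
    · intro h
      have huv : u ≠ v := fun he => hw (he ▸ h).symm
      exact ⟨⟨u, huv⟩, ⟨fun he => (G.ne_of_adj h) (congrArg Subtype.val he),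
        Or.inl (Or.inl h)⟩, rfl⟩
  unfold degN
  rw [← hset, Set.ncard_image_of_injective _ Subtype.val_injective]

/-- `γ_coe(G/v) ≤ γ_coe(G) + deg v − 1`. -/
theorem stmt_11 {V : Type*} [Fintype V] (G : SimpleGraph V) (v : V) :
    (coevenNum (contractVertex G v) : ℤ) ≤ coevenNum G + degN G v - 1 := by
  classical
  have hne : {n | ∃ D : Set V, IsCoEvenDom G D ∧ D.ncard = n}.Nonempty := by
    refine ⟨(Set.univ : Set V).ncard, Set.univ, ⟨?_, ?_⟩, rfl⟩ <;>
      intro w hw <;> exact absurd (Set.mem_univ w) hw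
  obtain ⟨D, hD, hcard⟩ := Nat.sInf_mem hne
  set N := G.neighborSet v with hN
  set D' : Set {u : V // u ≠ v} := {u | ↑u ∈ D ∪ N} with hD'
  -- D' is co-even dominating in the contraction
  have hdom : IsCoEvenDom (contractVertex G v) D' := by
    constructor
    · intro w hw
      have hwD : ↑w ∉ D := fun h => hw (Or.inl h)
      have hwN : ¬ G.Adj v ↑w := fun h => hw (Or.inr h)
      obtain ⟨u, hu, hadj⟩ := hD.1 ↑w hwD
      have huv : u ≠ v := fun he => hwN (he ▸ hadj)
      refine ⟨⟨u, huv⟩, Or.inl hu, ?_⟩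
      exact ⟨fun he => (G.ne_of_adj hadj) (congrArg Subtype.val he),
        Or.inl (Or.inl hadj)⟩
    · intro w hw
      have hwD : ↑w ∉ D := fun h => hw (Or.inl h)
      have hwN : ¬ G.Adj v ↑w := fun h => hw (Or.inr h)
      rw [deg_contract_eq G v w hwN]
      exact hD.2 ↑w hwD
  have h1 : coevenNum (contractVertex G v) ≤ D'.ncard := Nat.sInf_le ⟨D', hdom, rfl⟩
  -- compute D'.ncard
  have hval : Subtype.val '' D' = (D ∪ N) \ {v} := by
    ext u
    simp only [hD', Set.mem_image, Set.mem_setOf_eq, Set.mem_diff, Set.mem_singleton_iff]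
    constructor
    · rintro ⟨⟨x, hx⟩, hm, rfl⟩; exact ⟨hm, hx⟩
    · rintro ⟨hm, hx⟩; exact ⟨⟨u, hx⟩, hm, rfl⟩
  have hD'card : D'.ncard = ((D ∪ N) \ {v}).ncard := by
    rw [← hval, Set.ncard_image_of_injective _ Subtype.val_injective]
  have hvN : v ∉ N := fun h => G.loopless.irrefl v h
  have key : (((D ∪ N) \ {v}).ncard : ℤ) ≤ D.ncard + N.ncard - 1 := by
    by_cases hvD : v ∈ D
    · have heq : (D ∪ N) \ {v} = (D \ {v}) ∪ N := by
        ext x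
        simp only [Set.mem_diff, Set.mem_union, Set.mem_singleton_iff]
        constructor
        · rintro ⟨h | h, hx⟩
          · exact Or.inl ⟨h, hx⟩
          · exact Or.inr h
        · rintro (⟨h, hx⟩ | h)
          · exact ⟨Or.inl h, hx⟩
          · exact ⟨Or.inr h, fun he => hvN (he ▸ h)⟩
      rw [heq]
      have h2 : ((D \ {v}) ∪ N).ncard ≤ (D \ {v}).ncard + N.ncard :=
        Set.ncard_union_le _ _
      have h3 : (D \ {v}).ncard = D.ncard - 1 :=
        Set.ncard_diff_singleton_of_mem hvD
      have h4 : 0 < D.ncard := (Set.ncard_pos (Set.toFinite _)).mpr ⟨v, hvD⟩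
      push_cast
      omega
    · obtain ⟨u, hu, hadj⟩ := hD.1 v hvD
      have huN : u ∈ N := hadj.symm
      have heq : (D ∪ N) \ {v} = D ∪ (N \ {u}) := by
        ext x
        simp only [Set.mem_diff, Set.mem_union, Set.mem_singleton_iff]
        constructor
        · rintro ⟨h | h, hx⟩
          · exact Or.inl h
          · by_cases hxu : x = u
            · exact Or.inl (hxu ▸ hu)
            · exact Or.inr ⟨h, hxu⟩
        · rintro (h | ⟨h, hx⟩)
          · exact ⟨Or.inl h, fun he => hvD (he ▸ h)⟩
          · exact ⟨Or.inr h, fun he => hvN (he ▸ h)⟩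
      rw [heq]
      have h2 : (D ∪ (N \ {u})).ncard ≤ D.ncard + (N \ {u}).ncard :=
        Set.ncard_union_le _ _
      have h3 : (N \ {u}).ncard = N.ncard - 1 :=
        Set.ncard_diff_singleton_of_mem huN
      have h4 : 0 < N.ncard := (Set.ncard_pos (Set.toFinite _)).mpr ⟨u, huN⟩
      push_cast
      omega
  have hdeg : degN G v = N.ncard := rfl
  have hcard2 : D.ncard = coevenNum G := hcard
  rw [← hcard2, hdeg]
  calc (coevenNum (contractVertex G v) : ℤ) ≤ D'.ncard := by exact_mod_cast h1
    _ = ((D ∪ N) \ {v}).ncard := by exact_mod_cast hD'card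
    _ ≤ D.ncard + N.ncard - 1 := key
end

section
/- For any finite simple graph G=(V,E) and vertex v ∈ V, γ_coe(G) ≤ γ_coe(G/v) + deg(v) + 1, where G/v is the graph obtained by deleting v and making N_G(v) a clique (equivalently γ_coe(G/v) ≥ γ_coe(G) − deg(v) − 1). -/
open SimpleGraph

lemma contractVertex_adj {V : Type*} (G : SimpleGraph V) (v : V)
    (a b : {u : V // u ≠ v}) :
    (contractVertex G v).Adj a b ↔
      a ≠ b ∧ (G.Adj ↑a ↑b ∨ (G.Adj ↑a v ∧ G.Adj ↑b v)) := by
  simp only [contractVertex, SimpleGraph.fromRel_adj]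
  constructor
  · rintro ⟨h, h' | h'⟩
    · exact ⟨h, h'⟩
    · refine ⟨h, ?_⟩
      rcases h' with h' | ⟨h1, h2⟩
      · exact Or.inl h'.symm
      · exact Or.inr ⟨h2, h1⟩
  · rintro ⟨h, h'⟩
    exact ⟨h, Or.inl h'⟩

/-- `γ_coe(G) ≤ γ_coe(G/v) + deg v + 1`. -/
theorem stmt_12 {V : Type*} [Fintype V] (G : SimpleGraph V) (v : V) :
    coevenNum G ≤ coevenNum (contractVertex G v) + degN G v + 1 := by
  classical
  have hne : {n | ∃ D : Set {u : V // u ≠ v},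
      IsCoEvenDom (contractVertex G v) D ∧ D.ncard = n}.Nonempty := by
    refine ⟨(Set.univ : Set {u : V // u ≠ v}).ncard, Set.univ, ⟨?_, ?_⟩, rfl⟩
    · intro w hw; exact absurd (Set.mem_univ w) hw
    · intro w hw; exact absurd (Set.mem_univ w) hw
  obtain ⟨D, hD, hcard⟩ := Nat.sInf_mem hne
  set D' : Set V := (Subtype.val '' D) ∪ insert v (G.neighborSet v) with hD'
  have hvD' : v ∈ D' := Or.inr (Set.mem_insert v _)
  have hNv : ∀ u, G.Adj u v → u ∈ D' := fun u hu =>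
    Or.inr (Set.mem_insert_of_mem _ hu.symm)
  have hdom : IsCoEvenDom G D' := by
    constructor
    · intro u hu
      have huv : u ≠ v := fun h => hu (h ▸ hvD')
      have hadj : ¬ G.Adj u v := fun h => hu (hNv u h)
      have huD : (⟨u, huv⟩ : {x : V // x ≠ v}) ∉ D := by
        intro h; exact hu (Or.inl ⟨_, h, rfl⟩)
      obtain ⟨w, hwD, hw⟩ := hD.1 _ huD
      rw [contractVertex_adj] at hw
      rcases hw.2 with h | ⟨_, h⟩
      · exact ⟨↑w, Or.inl ⟨w, hwD, rfl⟩, h⟩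
      · exact absurd h hadj
    · intro u hu
      have huv : u ≠ v := fun h => hu (h ▸ hvD')
      have hadj : ¬ G.Adj u v := fun h => hu (hNv u h)
      have huD : (⟨u, huv⟩ : {x : V // x ≠ v}) ∉ D := by
        intro h; exact hu (Or.inl ⟨_, h, rfl⟩)
      have hdeg : degN G u = degN (contractVertex G v) ⟨u, huv⟩ := by
        have hset : G.neighborSet u =
            Subtype.val '' ((contractVertex G v).neighborSet ⟨u, huv⟩) := by
          ext w
          simp only [Set.mem_image, SimpleGraph.mem_neighborSet,
            contractVertex_adj]
          constructor
          · intro hw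
            have hwv : w ≠ v := fun h => hadj (h ▸ hw)
            refine ⟨⟨w, hwv⟩, ⟨?_, Or.inl hw⟩, rfl⟩
            intro h
            have huw : u = w := congrArg Subtype.val h
            exact G.loopless.irrefl w (huw ▸ hw)
          · rintro ⟨⟨w', hw'v⟩, ⟨_, h | ⟨h, _⟩⟩, rfl⟩
            · exact h
            · exact absurd h hadj
        rw [degN, degN, hset,
          Set.ncard_image_of_injective _ Subtype.val_injective]
      rw [hdeg] at *
      exact hdeg ▸ hD.2 _ huD
  have h1 : coevenNum G ≤ D'.ncard := Nat.sInf_le ⟨D', hdom, rfl⟩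
  have h2 : D'.ncard ≤ D.ncard + (degN G v + 1) := by
    calc D'.ncard ≤ (Subtype.val '' D).ncard + (insert v (G.neighborSet v)).ncard :=
          Set.ncard_union_le _ _
      _ ≤ D.ncard + (degN G v + 1) := by
          gcongr
          · exact le_of_eq (Set.ncard_image_of_injective _ Subtype.val_injective)
          · rw [degN]
            exact Set.ncard_insert_le v (G.neighborSet v)
  have h3 : D.ncard = coevenNum (contractVertex G v) := hcard
  omega
end

section
/- If D is a co-even dominating set of G/v (the graph obtained by deleting v and making its open neighbourhood a clique), then D ∪ N_G[v] is a co-even dominating set of G. -/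
open SimpleGraph

/-- If `D` is a co-even dominating set of `G/v`, then `D ∪ N_G[v]` is a
co-even dominating set of `G`. -/
theorem stmt_13 {V : Type*} [Fintype V] (G : SimpleGraph V) (v : V)
    (D : Set {u : V // u ≠ v}) (hD : IsCoEvenDom (contractVertex G v) D) :
    IsCoEvenDom G (Subtype.val '' D ∪ insert v (G.neighborSet v)) := by
  obtain ⟨hdom, heven⟩ := hD
  have key : ∀ (w : V) (hwv : w ≠ v), ¬ G.Adj v w →
      Subtype.val '' ((contractVertex G v).neighborSet ⟨w, hwv⟩) = G.neighborSet w := by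
    intro w hwv hnadj
    ext u
    simp only [Set.mem_image, mem_neighborSet, contractVertex, fromRel_adj]
    constructor
    · rintro ⟨u', ⟨hne, h⟩, rfl⟩
      rcases h with (h | ⟨h1, h2⟩) | (h | ⟨h1, h2⟩)
      · exact h
      · exact absurd (h1.symm) hnadj
      · exact h.symm
      · exact absurd (h2.symm) hnadj
    · intro hadj
      have hu : u ≠ v := by
        rintro rfl; exact hnadj (hadj.symm)
      refine ⟨⟨u, hu⟩, ⟨?_, Or.inl (Or.inl hadj)⟩, rfl⟩
      intro h
      exact hadj.ne (congrArg Subtype.val h)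
  constructor
  · intro w hw
    have hwv : w ≠ v := by
      rintro rfl; exact hw (Set.mem_union_right _ (Set.mem_insert _ _))
    have hwadj : ¬ G.Adj v w := fun h =>
      hw (Set.mem_union_right _ (Set.mem_insert_of_mem _ h))
    have hwD' : (⟨w, hwv⟩ : {u : V // u ≠ v}) ∉ D := fun h =>
      hw (Set.mem_union_left _ ⟨_, h, rfl⟩)
    obtain ⟨u', hu'D, hadj⟩ := hdom _ hwD'
    rw [contractVertex, fromRel_adj] at hadj
    obtain ⟨_, h⟩ := hadj
    rcases h with (h | ⟨h1, h2⟩) | (h | ⟨h1, h2⟩)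
    · exact ⟨u', Or.inl ⟨u', hu'D, rfl⟩, h⟩
    · exact absurd (h2.symm) hwadj
    · exact ⟨u', Or.inl ⟨u', hu'D, rfl⟩, h.symm⟩
    · exact absurd (h1.symm) hwadj
  · intro w hw
    have hwv : w ≠ v := by
      rintro rfl; exact hw (Set.mem_union_right _ (Set.mem_insert _ _))
    have hwadj : ¬ G.Adj v w := fun h =>
      hw (Set.mem_union_right _ (Set.mem_insert_of_mem _ h))
    have hwD' : (⟨w, hwv⟩ : {u : V // u ≠ v}) ∉ D := fun h =>
      hw (Set.mem_union_left _ ⟨_, h, rfl⟩)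
    have := heven _ hwD'
    have hdeg : degN G w = degN (contractVertex G v) ⟨w, hwv⟩ := by
      unfold degN
      rw [← key w hwv hwadj, Set.ncard_image_of_injective _ Subtype.val_injective]
    rw [hdeg]
    exact this
end
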